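/- arXiv:2009.02402 — 3 statements merged into one kernel-verified Lean document; each statement's English description precedes it below -/
import Mathlib

section
/- Let n ≥ 5, p ≥ 1 and s > 1, and let K₀(n,s), K₁(n,s), K₂(n,s), K₃(n,s) be the cylindrical bi-Laplacian coefficients. Let V = (v_1, …, v_p) : ℝ → ℝ^p be C⁴ and satisfy the autonomous ODE system v_i'''' + K₃ v_i''' + K₂ v_i'' + K₁ v_i' + K₀ v_i = |V|^{s−1} v_i on ℝ for each i. Define the Hamiltonian energy H(t) = −⟨V'''(t), V'(t)⟩ − K₃ ⟨V''(t), V'(t)⟩ + (1/2)( |V''(t)|² − K₂ |V'(t)|² − K₀ |V(t)|² ) + (1/(s+1)) |V(t)|^{s+1}. Then H is differentiable and H'(t) = K₁ |V'(t)|² − K₃ |V''(t)|² for every t ∈ ℝ. -/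
/-!
Multiplying the `i`-th equation by `v_i'` turns every term into an exact derivative except
`K₁ v_i'²` and `K₃ v_i''²`, which survive as the dissipation, and the forcing
`|V|^(s-1) v_i v_i'`, whose sum over `i` is the derivative of `|V|^(s+1) / (s+1)`.
-/

noncomputable def K0 (n : ℕ) (s : ℝ) : ℝ :=
  8 / (s - 1) ^ 4 *
    (((n : ℝ) - 2) * ((n : ℝ) - 4) * (s - 1) ^ 3
      + 2 * ((n : ℝ) ^ 2 - 10 * (n : ℝ) + 20) * (s - 1) ^ 2
      - 16 * ((n : ℝ) - 4) * (s - 1) + 32)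

noncomputable def K1 (n : ℕ) (s : ℝ) : ℝ :=
  -2 / (s - 1) ^ 3 *
    (((n : ℝ) - 2) * ((n : ℝ) - 4) * (s - 1) ^ 3
      + 4 * ((n : ℝ) ^ 2 - 10 * (n : ℝ) + 20) * (s - 1) ^ 2
      - 48 * ((n : ℝ) - 4) * (s - 1) + 128)

noncomputable def K2 (n : ℕ) (s : ℝ) : ℝ :=
  1 / (s - 1) ^ 2 *
    (((n : ℝ) ^ 2 - 10 * (n : ℝ) + 20) * (s - 1) ^ 2
      - 24 * ((n : ℝ) - 4) * (s - 1) + 96)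

noncomputable def K3 (n : ℕ) (s : ℝ) : ℝ :=
  2 / (s - 1) * (((n : ℝ) - 4) * (s - 1) - 8)

theorem ContDiff.hasDerivAt_iteratedDeriv {f : ℝ → ℝ} {n k : ℕ} (hf : ContDiff ℝ n f)
    (hk : k < n) (t : ℝ) :
    HasDerivAt (iteratedDeriv k f) (iteratedDeriv (k + 1) f t) t := by
  rw [iteratedDeriv_succ]
  exact (hf.differentiable_iteratedDeriv k (by exact_mod_cast hk) t).hasDerivAt

theorem HasDerivAt.sqrt_rpow {q : ℝ → ℝ} {q' r t : ℝ} (hq : HasDerivAt q q' t)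
    (hq₀ : ∀ τ, 0 ≤ q τ) (hr : 2 ≤ r) :
    HasDerivAt (fun τ => √(q τ) ^ r) (r / 2 * √(q t) ^ (r - 2) * q') t := by
  have hsqrt_rpow : ∀ τ (a : ℝ), √(q τ) ^ a = q τ ^ (a / 2) := fun τ a => by
    rw [Real.sqrt_eq_rpow, ← Real.rpow_mul (hq₀ τ), one_div_mul_eq_div]
  simp only [hsqrt_rpow]
  convert hq.rpow_const (p := r / 2) (Or.inr (by linarith)) using 1
  ring_nf

theorem hasDerivAt_quadraticEnergy {f : ℝ → ℝ} {a₀ a₁ a₂ a₃ g t : ℝ}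
    (hf : ContDiff ℝ 4 f)
    (hode : iteratedDeriv 4 f t + a₃ * iteratedDeriv 3 f t + a₂ * iteratedDeriv 2 f t
      + a₁ * deriv f t + a₀ * f t = g) :
    HasDerivAt
      (fun τ => -(iteratedDeriv 3 f τ * deriv f τ) - a₃ * (iteratedDeriv 2 f τ * deriv f τ)
        + 1 / 2 * (iteratedDeriv 2 f τ ^ 2 - a₂ * deriv f τ ^ 2 - a₀ * f τ ^ 2))
      (a₁ * deriv f t ^ 2 - a₃ * iteratedDeriv 2 f t ^ 2 - g * deriv f t) t := by
  have h₀ : HasDerivAt f (deriv f t) t := by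
    simpa using hf.hasDerivAt_iteratedDeriv (k := 0) (by norm_num) t
  have h₁ : HasDerivAt (deriv f) (iteratedDeriv 2 f t) t := by
    simpa using hf.hasDerivAt_iteratedDeriv (k := 1) (by norm_num) t
  have h₂ := hf.hasDerivAt_iteratedDeriv (k := 2) (by norm_num) t
  have h₃ := hf.hasDerivAt_iteratedDeriv (k := 3) (by norm_num) t
  have hcross := (h₃.mul h₁).neg.sub ((h₂.mul h₁).const_mul a₃)
  have hsquares :=
    (((h₂.fun_pow 2).sub ((h₁.fun_pow 2).const_mul a₂)).sub
      ((h₀.fun_pow 2).const_mul a₀)).const_mul (1 / 2 : ℝ)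
  refine (hcross.add hsquares).congr_deriv ?_
  rw [← hode]
  push_cast
  ring

theorem statement9_general (n p : ℕ) (s : ℝ) (hs : 1 < s)
    (v : Fin p → ℝ → ℝ)
    (hC4 : ∀ i, ContDiff ℝ 4 (v i))
    (hode : ∀ i, ∀ t : ℝ,
      iteratedDeriv 4 (v i) t + K3 n s * iteratedDeriv 3 (v i) t
        + K2 n s * iteratedDeriv 2 (v i) t + K1 n s * deriv (v i) t
        + K0 n s * v i t
        = (Real.sqrt (∑ j, v j t ^ 2)) ^ (s - 1) * v i t) :
    ∀ t : ℝ,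
      HasDerivAt
        (fun τ : ℝ =>
          -(∑ i, iteratedDeriv 3 (v i) τ * deriv (v i) τ)
            - K3 n s * (∑ i, iteratedDeriv 2 (v i) τ * deriv (v i) τ)
            + (1 / 2) * ((∑ i, iteratedDeriv 2 (v i) τ ^ 2)
                - K2 n s * (∑ i, deriv (v i) τ ^ 2)
                - K0 n s * (∑ i, v i τ ^ 2))
            + (1 / (s + 1)) * (Real.sqrt (∑ i, v i τ ^ 2)) ^ (s + 1))
        (K1 n s * (∑ i, deriv (v i) t ^ 2)
          - K3 n s * (∑ i, iteratedDeriv 2 (v i) t ^ 2)) t := by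
  intro t
  have hquadratic := HasDerivAt.fun_sum (u := Finset.univ) fun i _ =>
    hasDerivAt_quadraticEnergy (hC4 i) (hode i t)
  have hv : ∀ i, HasDerivAt (v i) (deriv (v i) t) t := fun i =>
    ((hC4 i).differentiable (by norm_num) t).hasDerivAt
  have hnorm_sq := HasDerivAt.fun_sum (u := Finset.univ) fun i _ => (hv i).fun_pow 2
  have hpotential := (hnorm_sq.sqrt_rpow (fun τ => Finset.sum_nonneg fun i _ => sq_nonneg (v i τ))
    (by linarith : (2 : ℝ) ≤ s + 1)).const_mul (1 / (s + 1))
  refine ((hquadratic.add hpotential).congr_of_eventuallyEq (.of_forall fun τ => ?_)).congr_deriv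
    ?_
  · simp only [Pi.add_apply, Finset.sum_add_distrib, Finset.sum_sub_distrib,
      Finset.sum_neg_distrib, ← Finset.mul_sum]
  · have hs₁ : s + 1 ≠ 0 := by linarith
    simp only [Finset.sum_sub_distrib, Finset.mul_sum]
    field_simp
    ring_nf

/-- derivative of the Hamiltonian energy along solutions of the
autonomous cylindrical ODE system (radial monotonicity formula of the
Pohozaev functional). -/
theorem statement9 (n p : ℕ) (hn : 5 ≤ n) (hp : 1 ≤ p) (s : ℝ) (hs : 1 < s)
    (v : Fin p → ℝ → ℝ)
    (hC4 : ∀ i, ContDiff ℝ 4 (v i))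
    (hode : ∀ i, ∀ t : ℝ,
      iteratedDeriv 4 (v i) t + K3 n s * iteratedDeriv 3 (v i) t
        + K2 n s * iteratedDeriv 2 (v i) t + K1 n s * deriv (v i) t
        + K0 n s * v i t
        = (Real.sqrt (∑ j, v j t ^ 2)) ^ (s - 1) * v i t) :
    ∀ t : ℝ,
      HasDerivAt
        (fun τ : ℝ =>
          -(∑ i, iteratedDeriv 3 (v i) τ * deriv (v i) τ)
            - K3 n s * (∑ i, iteratedDeriv 2 (v i) τ * deriv (v i) τ)
            + (1 / 2) * ((∑ i, iteratedDeriv 2 (v i) τ ^ 2)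
                - K2 n s * (∑ i, deriv (v i) τ ^ 2)
                - K0 n s * (∑ i, v i τ ^ 2))
            + (1 / (s + 1)) * (Real.sqrt (∑ i, v i τ ^ 2)) ^ (s + 1))
        (K1 n s * (∑ i, deriv (v i) t ^ 2)
          - K3 n s * (∑ i, iteratedDeriv 2 (v i) t ^ 2)) t :=
  statement9_general n p s hs v hC4 hode
end

section
/- Let n ≥ 5, p ≥ 1 and n/(n−4) < s < (n+4)/(n−4). If U = (u_1, …, u_p) : ℝ^n → ℝ^p is a nonnegative C⁴ solution of Δ² u_i = |U|^{s−1} u_i on all of ℝ^n, then U is superharmonic: −Δ u_i(x) ≥ 0 for every x ∈ ℝ^n and every i = 1, …, p. -/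
open MeasureTheory Metric Filter Topology

/-- The Euclidean Laplacian: sum of second partial derivatives. -/
noncomputable def lap {n : ℕ} (u : EuclideanSpace ℝ (Fin n) → ℝ)
    (x : EuclideanSpace ℝ (Fin n)) : ℝ :=
  ∑ i : Fin n,
    fderiv ℝ (fun y => fderiv ℝ u y (EuclideanSpace.single i 1)) x
      (EuclideanSpace.single i 1)

/-- The bi-Laplacian Δ² = Δ ∘ Δ. -/
noncomputable def bilap {n : ℕ} (u : EuclideanSpace ℝ (Fin n) → ℝ) :
    EuclideanSpace ℝ (Fin n) → ℝ :=
  lap (lap u)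

/-- The pointwise Euclidean norm |U(x)| of a p-map U. -/
noncomputable def vnorm {n p : ℕ} (U : Fin p → EuclideanSpace ℝ (Fin n) → ℝ)
    (x : EuclideanSpace ℝ (Fin n)) : ℝ :=
  Real.sqrt (∑ i, U i x ^ 2)

/-!
Suppose `Δu(x₀) > 0` for a component `u`, so that `u ≥ 0`, `Δ²u ≥ u ^ s` with `s > 1`, and `Δu` is
subharmonic. Test `w_R(y) = u(x₀ + R y)` against `ρ(y) = (1 - ‖y‖²)₊ ^ (m + 4)` with `m s ≥ m + 4`.
Subharmonicity makes the `ρ`-weighted means of `Δu` around `x₀` nondecreasing in the radius, so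
`∫ w_R Δρ = R² ∫ Δu(x₀ + R y) ρ(y) dy ≥ c R²` with `c = Δu(x₀) ∫ ρ > 0`. Both `|Δρ|` and `|Δ²ρ|` are
at most `C (1 - ‖y‖²)₊ ^ m`, and `x ≤ x ^ s + 1` turns `w_R (1 - ‖y‖²)₊ ^ m` into
`w_R ^ s ρ + 𝟙_{B₁}`. With `J_R = ∫ w_R ^ s ρ` this gives `c R² ≤ C (J_R + |B₁|)` and
`R⁴ J_R ≤ ∫ w_R Δ²ρ ≤ C (J_R + |B₁|)`; the second bound keeps `J_R` bounded, contradicting the first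
as `R → ∞`.
-/

open Set

namespace Superharmonic

theorem integrable_mul_of_hasCompactSupport {X : Type*} [TopologicalSpace X] [MeasurableSpace X]
    [OpensMeasurableSpace X] {μ : Measure X} [IsFiniteMeasureOnCompacts μ] {φ ψ : X → ℝ}
    (hφ : Continuous φ) (hψ : Continuous ψ) (h : HasCompactSupport φ ∨ HasCompactSupport ψ) :
    Integrable (fun x => φ x * ψ x) μ :=
  (hφ.mul hψ).integrable_of_hasCompactSupport (h.elim (·.mul_right) (·.mul_left))

theorem hasDerivAt_integral_comp_homothety_mul {E : Type*} [NormedAddCommGroup E]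
    [NormedSpace ℝ E] [MeasurableSpace E] [OpensMeasurableSpace E] {μ : Measure E}
    [IsFiniteMeasureOnCompacts μ] {v ρ : E → ℝ} (hv : ContDiff ℝ 1 v) (hρ : Continuous ρ)
    (hρc : HasCompactSupport ρ) (x₀ : E) (t : ℝ) :
    HasDerivAt (fun t => ∫ y, v (x₀ + t • y) * ρ y ∂μ)
      (∫ y, fderiv ℝ v (x₀ + t • y) y * ρ y ∂μ) t := by
  have hF (s : ℝ) : Continuous fun y => v (x₀ + s • y) * ρ y :=
    (hv.continuous.comp (by fun_prop)).mul hρ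
  have hF' : Continuous fun p : ℝ × E => fderiv ℝ v (x₀ + p.1 • p.2) p.2 * ρ p.2 :=
    (((hv.continuous_fderiv one_ne_zero).comp (by fun_prop)).clm_apply continuous_snd).mul
      (hρ.comp continuous_snd)
  obtain ⟨C, hC⟩ := ((isCompact_closedBall t 1).prod hρc).exists_bound_of_continuousOn
    hF'.continuousOn
  have hbound : ∀ y, ∀ s ∈ ball t 1,
      ‖fderiv ℝ v (x₀ + s • y) y * ρ y‖ ≤ (tsupport ρ).indicator (fun _ => C) y := by
    intro y s hs
    by_cases hy : y ∈ tsupport ρ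
    · rw [indicator_of_mem hy]
      exact hC (s, y) ⟨ball_subset_closedBall hs, hy⟩
    · simp [image_eq_zero_of_notMem_tsupport hy, indicator_of_notMem hy]
  refine (hasDerivAt_integral_of_dominated_loc_of_deriv_le (ball_mem_nhds t one_pos)
    (.of_forall fun s => (hF s).aestronglyMeasurable)
    ((hF t).integrable_of_hasCompactSupport hρc.mul_left)
    (hF'.comp (continuous_const.prodMk continuous_id)).aestronglyMeasurable (.of_forall hbound)
    ((integrableOn_const hρc.measure_lt_top.ne).integrable_indicator
      (isClosed_tsupport ρ).measurableSet)
    (.of_forall fun y s _ => ?_)).2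
  have hline : HasDerivAt (fun s : ℝ => x₀ + s • y) y s := by
    simpa using ((hasDerivAt_id s).smul_const y).const_add x₀
  exact (((hv.differentiable one_ne_zero) _).hasFDerivAt.comp_hasDerivAt s hline).mul_const _

theorem hasDerivAt_max_zero_pow {k : ℕ} (hk : 2 ≤ k) (x : ℝ) :
    HasDerivAt (fun x : ℝ => max x 0 ^ k) (k * max x 0 ^ (k - 1)) x := by
  have hk0 : k ≠ 0 := by omega
  have hk1 : k - 1 ≠ 0 := by omega
  have right : HasDerivWithinAt (fun x : ℝ => max x 0 ^ k) (k * max x 0 ^ (k - 1)) (Ici 0) x := by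
    rcases le_or_gt 0 x with hx | hx
    · rw [max_eq_left hx]
      exact (hasDerivAt_pow k x).hasDerivWithinAt.congr
        (fun y hy => by rw [max_eq_left (mem_Ici.1 hy)]) (by rw [max_eq_left hx])
    · exact HasFDerivWithinAt.of_notMem_closure (by simpa using hx)
  have left : HasDerivWithinAt (fun x : ℝ => max x 0 ^ k) (k * max x 0 ^ (k - 1)) (Iic 0) x := by
    rcases le_or_gt x 0 with hx | hx
    · rw [max_eq_right hx, zero_pow hk1, mul_zero]
      exact (hasDerivWithinAt_const x _ 0).congr
        (fun y hy => by rw [max_eq_right (mem_Iic.1 hy), zero_pow hk0])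
        (by rw [max_eq_right hx, zero_pow hk0])
    · exact HasFDerivWithinAt.of_notMem_closure (by simpa using hx)
  simpa using right.union left

theorem contDiff_max_zero_pow {m k : ℕ} (hmk : m < k) :
    ContDiff ℝ m (fun x : ℝ => max x 0 ^ k) := by
  induction m generalizing k with
  | zero => exact contDiff_zero.2 ((continuous_id.max continuous_const).pow k)
  | succ m ih =>
    rw [Nat.cast_succ, contDiff_succ_iff_deriv]
    refine ⟨fun x => (hasDerivAt_max_zero_pow (by omega) x).differentiableAt, by simp, ?_⟩
    rw [show deriv (fun x : ℝ => max x 0 ^ k) = fun x : ℝ => (k : ℝ) * max x 0 ^ (k - 1) from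
      funext fun x => (hasDerivAt_max_zero_pow (by omega) x).deriv]
    exact contDiff_const.mul (ih (by omega))

variable {n : ℕ}

noncomputable def partialDeriv (i : Fin n) (f : EuclideanSpace ℝ (Fin n) → ℝ)
    (y : EuclideanSpace ℝ (Fin n)) : ℝ :=
  fderiv ℝ f y (EuclideanSpace.single i 1)

theorem lap_eq_sum (f : EuclideanSpace ℝ (Fin n) → ℝ) (x : EuclideanSpace ℝ (Fin n)) :
    lap f x = ∑ i, partialDeriv i (partialDeriv i f) x :=
  rfl

variable {f g : EuclideanSpace ℝ (Fin n) → ℝ}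

theorem contDiff_partialDeriv {m : WithTop ℕ∞} (hf : ContDiff ℝ (m + 1) f) (i : Fin n) :
    ContDiff ℝ m (partialDeriv i f) :=
  (hf.fderiv_right le_rfl).clm_apply contDiff_const

theorem differentiable_partialDeriv (hf : ContDiff ℝ 2 f) (i : Fin n) :
    Differentiable ℝ (partialDeriv i f) :=
  (contDiff_partialDeriv (m := 1) hf i).differentiable one_ne_zero

theorem contDiff_lap {m : WithTop ℕ∞} (hf : ContDiff ℝ (m + 2) f) : ContDiff ℝ m (lap f) := by
  rw [show m + 2 = m + 1 + 1 by rw [add_assoc]; norm_num] at hf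
  exact ContDiff.sum fun i _ => contDiff_partialDeriv (contDiff_partialDeriv hf i) i

theorem partialDeriv_add (hf : Differentiable ℝ f) (hg : Differentiable ℝ g) (i : Fin n)
    (y : EuclideanSpace ℝ (Fin n)) :
    partialDeriv i (fun y => f y + g y) y = partialDeriv i f y + partialDeriv i g y := by
  simp [partialDeriv, fderiv_fun_add (hf y) (hg y)]

theorem partialDeriv_const_mul (c : ℝ) (hf : Differentiable ℝ f) (i : Fin n)
    (y : EuclideanSpace ℝ (Fin n)) :
    partialDeriv i (fun y => c * f y) y = c * partialDeriv i f y := by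
  simp [partialDeriv, ((hf y).hasFDerivAt.const_mul c).fderiv]

theorem partialDeriv_mul_apply (hf : Differentiable ℝ f) (i : Fin n)
    (y : EuclideanSpace ℝ (Fin n)) :
    partialDeriv i (fun z => f z * z i) y = partialDeriv i f y * y i + f y := by
  have hcoord : HasFDerivAt (fun z : EuclideanSpace ℝ (Fin n) => z i)
      (EuclideanSpace.proj i : EuclideanSpace ℝ (Fin n) →L[ℝ] ℝ) y :=
    (EuclideanSpace.proj (𝕜 := ℝ) i).hasFDerivAt
  have hmul : HasFDerivAt (fun z => f z * z i)
      (f y • (EuclideanSpace.proj i : EuclideanSpace ℝ (Fin n) →L[ℝ] ℝ) + y i • fderiv ℝ f y) y :=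
    (hf y).hasFDerivAt.mul hcoord
  simp [partialDeriv, hmul.fderiv]
  ring

theorem lap_add (hf : ContDiff ℝ 2 f) (hg : ContDiff ℝ 2 g) :
    lap (fun y => f y + g y) = fun y => lap f y + lap g y := by
  funext y
  simp only [lap_eq_sum, ← Finset.sum_add_distrib]
  refine Finset.sum_congr rfl fun i _ => ?_
  rw [funext (partialDeriv_add (hf.differentiable two_ne_zero) (hg.differentiable two_ne_zero) i),
    partialDeriv_add (differentiable_partialDeriv hf i) (differentiable_partialDeriv hg i)]

theorem lap_const_mul (c : ℝ) (hf : ContDiff ℝ 2 f) :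
    lap (fun y => c * f y) = fun y => c * lap f y := by
  funext y
  simp only [lap_eq_sum, Finset.mul_sum]
  refine Finset.sum_congr rfl fun i _ => ?_
  rw [funext (partialDeriv_const_mul c (hf.differentiable two_ne_zero) i),
    partialDeriv_const_mul c (differentiable_partialDeriv hf i)]

theorem partialDeriv_comp_homothety (hf : Differentiable ℝ f) (x₀ : EuclideanSpace ℝ (Fin n))
    (R : ℝ) (i : Fin n) :
    partialDeriv i (fun z => f (x₀ + R • z)) = fun y => R * partialDeriv i f (x₀ + R • y) := by
  funext y
  have hA : HasFDerivAt (fun z : EuclideanSpace ℝ (Fin n) => x₀ + R • z)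
      (R • ContinuousLinearMap.id ℝ _) y :=
    ((hasFDerivAt_id y).const_smul R).const_add x₀
  have hcomp : HasFDerivAt (fun z => f (x₀ + R • z))
      ((fderiv ℝ f (x₀ + R • y)).comp (R • ContinuousLinearMap.id ℝ _)) y :=
    (hf _).hasFDerivAt.comp y hA
  simp [partialDeriv, hcomp.fderiv]

theorem lap_comp_homothety (hf : ContDiff ℝ 2 f) (x₀ : EuclideanSpace ℝ (Fin n)) (R : ℝ) :
    lap (fun z => f (x₀ + R • z)) = fun y => R ^ 2 * lap f (x₀ + R • y) := by
  funext y
  simp only [lap_eq_sum, Finset.mul_sum]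
  refine Finset.sum_congr rfl fun i _ => ?_
  have hpd := differentiable_partialDeriv hf i
  rw [partialDeriv_comp_homothety (hf.differentiable two_ne_zero),
    partialDeriv_const_mul (f := fun z => partialDeriv i f (x₀ + R • z)) R
      (hpd.comp (by fun_prop)), partialDeriv_comp_homothety hpd]
  ring

theorem lap_lap_comp_homothety (hf : ContDiff ℝ 4 f) (x₀ : EuclideanSpace ℝ (Fin n)) (R : ℝ) :
    lap (lap fun z => f (x₀ + R • z)) = fun y => R ^ 4 * lap (lap f) (x₀ + R • y) := by
  have hlap : ContDiff ℝ 2 (lap f) := contDiff_lap (m := 2) hf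
  rw [lap_comp_homothety (hf.of_le (by norm_num)),
    lap_const_mul (f := fun z => lap f (x₀ + R • z)) _ (hlap.comp (by fun_prop)),
    lap_comp_homothety hlap]
  funext y
  ring

theorem sum_mul_apply_single (L : EuclideanSpace ℝ (Fin n) →L[ℝ] ℝ)
    (y : EuclideanSpace ℝ (Fin n)) : ∑ i, y i * L (EuclideanSpace.single i 1) = L y := by
  conv_rhs => rw [← (EuclideanSpace.basisFun (Fin n) ℝ).sum_repr y]
  simp [map_sum, smul_eq_mul]

theorem hasCompactSupport_partialDeriv (hf : HasCompactSupport f) (i : Fin n) :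
    HasCompactSupport (partialDeriv i f) :=
  hf.fderiv_apply ℝ _

theorem hasCompactSupport_lap (hf : HasCompactSupport f) : HasCompactSupport (lap f) := by
  refine hf.mono' fun x hx => ?_
  by_contra hxf
  refine hx (Finset.sum_eq_zero fun i _ => ?_)
  exact fderiv_of_notMem_tsupport ℝ (fun h => hxf (tsupport_fderiv_apply_subset ℝ _ h)) ▸ rfl

theorem integral_mul_partialDeriv (hf : ContDiff ℝ 1 f) (hg : ContDiff ℝ 1 g)
    (hfg : HasCompactSupport f ∨ HasCompactSupport g) (i : Fin n) :
    ∫ y, f y * partialDeriv i g y = -∫ y, partialDeriv i f y * g y := by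
  have hf' : Continuous (partialDeriv i f) := (contDiff_partialDeriv (m := 0) hf i).continuous
  have hg' : Continuous (partialDeriv i g) := (contDiff_partialDeriv (m := 0) hg i).continuous
  refine integral_mul_fderiv_eq_neg_fderiv_mul_of_integrable
    (integrable_mul_of_hasCompactSupport hf' hg.continuous
      (hfg.imp_left (hasCompactSupport_partialDeriv · i)))
    (integrable_mul_of_hasCompactSupport hf.continuous hg'
      (hfg.imp_right (hasCompactSupport_partialDeriv · i)))
    (integrable_mul_of_hasCompactSupport hf.continuous hg.continuous hfg)
    (fun x _ => (hf.differentiable one_ne_zero) x) (fun x _ => (hg.differentiable one_ne_zero) x)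

theorem integral_mul_lap (hf : ContDiff ℝ 1 f) (hg : ContDiff ℝ 2 g)
    (hfg : HasCompactSupport f ∨ HasCompactSupport g) :
    ∫ y, f y * lap g y = -∫ y, ∑ i, partialDeriv i f y * partialDeriv i g y := by
  have hg' (i : Fin n) : ContDiff ℝ 1 (partialDeriv i g) := contDiff_partialDeriv hg i
  have hfg' (i : Fin n) : HasCompactSupport f ∨ HasCompactSupport (partialDeriv i g) :=
    hfg.imp_right (hasCompactSupport_partialDeriv · i)
  simp_rw [lap_eq_sum, Finset.mul_sum]
  rw [integral_finsetSum _ fun i _ => integrable_mul_of_hasCompactSupport hf.continuous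
      (contDiff_partialDeriv (m := 0) (hg' i) i).continuous
      ((hfg' i).imp_right (hasCompactSupport_partialDeriv · i)),
    integral_finsetSum _ fun i _ => integrable_mul_of_hasCompactSupport
      (contDiff_partialDeriv (m := 0) hf i).continuous (hg' i).continuous
      ((hfg' i).imp_left (hasCompactSupport_partialDeriv · i)),
    ← Finset.sum_neg_distrib]
  exact Finset.sum_congr rfl fun i _ => integral_mul_partialDeriv hf (hg' i) (hfg' i) i

theorem integral_lap_mul (hf : ContDiff ℝ 2 f) (hg : ContDiff ℝ 2 g)
    (hgc : HasCompactSupport g) :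
    ∫ y, lap f y * g y = ∫ y, f y * lap g y := by
  simp_rw [mul_comm (lap f _)]
  rw [integral_mul_lap (hg.of_le one_le_two) hf (Or.inl hgc),
    integral_mul_lap (hf.of_le one_le_two) hg (Or.inr hgc)]
  simp_rw [mul_comm]

theorem integral_lap_lap_mul (hf : ContDiff ℝ 4 f) (hg : ContDiff ℝ 4 g)
    (hgc : HasCompactSupport g) :
    ∫ y, lap (lap f) y * g y = ∫ y, f y * lap (lap g) y := by
  rw [integral_lap_mul (contDiff_lap (m := 2) hf) (hg.of_le (by norm_num)) hgc,
    integral_lap_mul (hf.of_le (by norm_num)) (contDiff_lap (m := 2) hg)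
      (hasCompactSupport_lap hgc)]

noncomputable def bump (k : ℕ) (y : EuclideanSpace ℝ (Fin n)) : ℝ :=
  max (1 - ‖y‖ ^ 2) 0 ^ k

variable {j k : ℕ}

theorem bump_nonneg (k : ℕ) (y : EuclideanSpace ℝ (Fin n)) : 0 ≤ bump k y :=
  pow_nonneg (le_max_right _ _) k

theorem bump_le_bump (hjk : j ≤ k) (y : EuclideanSpace ℝ (Fin n)) : bump k y ≤ bump j y :=
  pow_le_pow_of_le_one (le_max_right _ _)
    (max_le (sub_le_self _ (sq_nonneg _)) zero_le_one) hjk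

theorem bump_eq_zero (hk : k ≠ 0) {y : EuclideanSpace ℝ (Fin n)} (hy : 1 ≤ ‖y‖) :
    bump k y = 0 := by
  rw [bump, max_eq_right (by nlinarith), zero_pow hk]

theorem norm_sq_mul_bump (hk : k ≠ 0) (y : EuclideanSpace ℝ (Fin n)) :
    ‖y‖ ^ 2 * bump k y = bump k y - bump (k + 1) y := by
  rcases le_or_gt 1 ‖y‖ with hy | hy
  · simp [bump_eq_zero hk hy, bump_eq_zero k.succ_ne_zero hy]
  · rw [bump, bump, max_eq_left (by nlinarith [norm_nonneg y])]
    ring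

theorem contDiff_bump {m : ℕ} (hmk : m < k) : ContDiff ℝ m (bump (n := n) k) :=
  (contDiff_max_zero_pow hmk).comp (contDiff_const.sub (contDiff_norm_sq ℝ))

theorem hasCompactSupport_bump (hk : k ≠ 0) : HasCompactSupport (bump (n := n) k) :=
  HasCompactSupport.intro (isCompact_closedBall 0 1) fun _ hy =>
    bump_eq_zero hk (by simpa using hy : 1 < ‖_‖).le

theorem integral_bump_pos (hk : k ≠ 0) : 0 < ∫ y, bump (n := n) k y := by
  have hint : Integrable (bump (n := n) k) :=
    (contDiff_bump (m := 0) (Nat.pos_of_ne_zero hk)).continuous.integrable_of_hasCompactSupport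
      (hasCompactSupport_bump hk)
  rw [integral_pos_iff_support_of_nonneg (bump_nonneg k) hint]
  refine (measure_ball_pos volume 0 one_pos).trans_le (measure_mono fun y hy => ?_)
  have hy : ‖y‖ ^ 2 < 1 := by
    have := mem_ball_zero_iff.1 hy
    nlinarith [norm_nonneg y]
  exact (pow_pos (lt_max_of_lt_left (sub_pos.2 hy)) k).ne'

theorem hasFDerivAt_bump (hk : 1 ≤ k) (y : EuclideanSpace ℝ (Fin n)) :
    HasFDerivAt (bump (k + 1)) ((-(2 * (k + 1) * bump k y)) • innerSL ℝ y) y := by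
  have hd : HasFDerivAt (bump (k + 1))
      ((((k + 1 : ℕ) : ℝ) * max (1 - ‖y‖ ^ 2) 0 ^ (k + 1 - 1)) • -((2 : ℕ) • innerSL ℝ y)) y :=
    (hasDerivAt_max_zero_pow (k := k + 1) (by omega) _).comp_hasFDerivAt y
      ((hasStrictFDerivAt_norm_sq y).hasFDerivAt.const_sub 1)
  convert hd using 1
  ext v
  simp [bump]
  ring

theorem partialDeriv_bump (hk : 1 ≤ k) (i : Fin n) :
    partialDeriv i (bump (k + 1)) = fun y => -(2 * (k + 1)) * (bump k y * y i) := by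
  funext y
  simp [partialDeriv, (hasFDerivAt_bump hk y).fderiv, EuclideanSpace.inner_single_right]
  ring

theorem lap_bump (hk : 1 ≤ k) :
    lap (bump (n := n) (k + 2)) = fun y =>
      4 * (k + 2) * (k + 1) * bump k y + -(2 * (k + 2) * (2 * (k + 1) + n)) * bump (k + 1) y := by
  funext y
  have hdiff : Differentiable ℝ (bump (n := n) (k + 1)) :=
    (contDiff_bump (m := 1) (by omega)).differentiable one_ne_zero
  have hpd (i : Fin n) : partialDeriv i (partialDeriv i (bump (k + 2))) y =
      -(2 * (k + 2)) * (-(2 * (k + 1)) * (bump k y * y i) * y i + bump (k + 1) y) := by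
    rw [partialDeriv_bump (by omega),
      partialDeriv_const_mul (f := fun z => bump (k + 1) z * z i) _
        (hdiff.mul (EuclideanSpace.proj (𝕜 := ℝ) i).differentiable),
      partialDeriv_mul_apply hdiff, partialDeriv_bump hk]
    push_cast
    ring
  rw [lap_eq_sum, Finset.sum_congr rfl fun i _ => hpd i]
  have hnorm : ∑ i, y i * y i = ‖y‖ ^ 2 := by simp_rw [EuclideanSpace.real_norm_sq_eq, sq]
  simp only [← Finset.mul_sum, Finset.sum_add_distrib, mul_assoc, hnorm, Finset.sum_const,
    Finset.card_univ, Fintype.card_fin, nsmul_eq_mul]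
  rw [mul_comm (bump k y), norm_sq_mul_bump (by omega)]
  ring

theorem abs_mul_bump_add_mul_bump_le (A B : ℝ) (y : EuclideanSpace ℝ (Fin n)) :
    |A * bump k y + B * bump (k + 1) y| ≤ (|A| + |B|) * bump k y :=
  calc |A * bump k y + B * bump (k + 1) y|
      ≤ |A| * bump k y + |B| * bump (k + 1) y := by
        simpa only [abs_mul, abs_of_nonneg (bump_nonneg k y),
          abs_of_nonneg (bump_nonneg (k + 1) y)] using
          abs_add_le (A * bump k y) (B * bump (k + 1) y)
    _ ≤ |A| * bump k y + |B| * bump k y := by gcongr; exact bump_le_bump k.le_succ y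
    _ = (|A| + |B|) * bump k y := by ring

theorem exists_abs_lap_bump_le (hk : 1 ≤ k) :
    ∃ C, 0 ≤ C ∧ ∀ y, |lap (bump (n := n) (k + 2)) y| ≤ C * bump k y := by
  rw [lap_bump hk]
  exact ⟨_, add_nonneg (abs_nonneg _) (abs_nonneg _), abs_mul_bump_add_mul_bump_le _ _⟩

theorem exists_abs_lap_lap_bump_le (hk : 1 ≤ k) :
    ∃ C, 0 ≤ C ∧ ∀ y, |lap (lap (bump (n := n) (k + 4))) y| ≤ C * bump k y := by
  obtain ⟨C₀, hC₀, h₀⟩ := exists_abs_lap_bump_le (n := n) hk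
  obtain ⟨C₁, hC₁, h₁⟩ := exists_abs_lap_bump_le (n := n) (k := k + 1) (by omega)
  set A : ℝ := 4 * (↑(k + 2) + 2) * (↑(k + 2) + 1)
  set B : ℝ := -(2 * (↑(k + 2) + 2) * (2 * (↑(k + 2) + 1) + ↑n))
  have hb₂ : ContDiff ℝ 2 (bump (n := n) (k + 2)) := contDiff_bump (m := 2) (by omega)
  have hb₃ : ContDiff ℝ 2 (bump (n := n) (k + 2 + 1)) := contDiff_bump (m := 2) (by omega)
  rw [lap_bump (k := k + 2) (by omega), lap_add (f := fun y => A * bump (k + 2) y)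
    (g := fun y => B * bump (k + 2 + 1) y) (contDiff_const.mul hb₂) (contDiff_const.mul hb₃),
    lap_const_mul _ hb₂, lap_const_mul _ hb₃]
  refine ⟨|A| * C₀ + |B| * C₁, by positivity, fun y => ?_⟩
  calc |A * lap (bump (k + 2)) y + B * lap (bump (k + 2 + 1)) y|
      ≤ |A| * |lap (bump (k + 2)) y| + |B| * |lap (bump (k + 1 + 2)) y| := by
        simpa only [abs_mul] using
          abs_add_le (A * lap (bump (k + 2)) y) (B * lap (bump (k + 2 + 1)) y)
    _ ≤ |A| * (C₀ * bump k y) + |B| * (C₁ * bump k y) := by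
        gcongr
        · exact h₀ y
        · exact (h₁ y).trans (by gcongr; exact bump_le_bump k.le_succ y)
    _ = (|A| * C₀ + |B| * C₁) * bump k y := by ring

theorem monotoneOn_integral_comp_homothety_mul_bump {v : EuclideanSpace ℝ (Fin n) → ℝ}
    (hv : ContDiff ℝ 2 v) (hsub : ∀ x, 0 ≤ lap v x) (hk : 1 ≤ k)
    (x₀ : EuclideanSpace ℝ (Fin n)) :
    MonotoneOn (fun t : ℝ => ∫ y, v (x₀ + t • y) * bump k y) (Ici 0) := by
  have hderiv := hasDerivAt_integral_comp_homothety_mul (μ := volume) (hv.of_le one_le_two)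
    (contDiff_bump (m := 0) (by omega)).continuous (hasCompactSupport_bump (k := k) (by omega))
    x₀
  refine monotoneOn_of_deriv_nonneg (convex_Ici 0)
    (HasDerivAt.continuousOn fun t _ => hderiv t)
    (fun t _ => (hderiv t).differentiableAt.differentiableWithinAt) fun t ht => ?_
  rw [interior_Ici] at ht
  rw [(hderiv t).deriv]
  have hw : ContDiff ℝ 2 fun z => v (x₀ + t • z) := hv.comp (by fun_prop)
  have hψ : ContDiff ℝ 1 (bump (n := n) (k + 1)) := contDiff_bump (m := 1) (by omega)
  -- Green's identity against `bump (k + 1)`, whose gradient is `-2 (k + 1) bump k y • y`, turns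
  -- `t` times the derivative into a negative multiple of `∫ bump (k + 1) Δ(v (x₀ + t •)) ≥ 0`.
  have hgrad (y : EuclideanSpace ℝ (Fin n)) :
      ∑ i, partialDeriv i (bump (k + 1)) y * partialDeriv i (fun z => v (x₀ + t • z)) y =
        -(2 * (k + 1)) * t * (fderiv ℝ v (x₀ + t • y) y * bump k y) := by
    simp only [partialDeriv_bump hk, partialDeriv_comp_homothety (hv.differentiable two_ne_zero)]
    rw [← sum_mul_apply_single (fderiv ℝ v (x₀ + t • y)), Finset.sum_mul, Finset.mul_sum]
    exact Finset.sum_congr rfl fun i _ => by simp only [partialDeriv]; ring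
  have hgreen := integral_mul_lap hψ hw (Or.inl (hasCompactSupport_bump (by omega)))
  simp_rw [hgrad, lap_comp_homothety hv, integral_const_mul] at hgreen
  have hlap : 0 ≤ ∫ y, bump (k + 1) y * (t ^ 2 * lap v (x₀ + t • y)) :=
    integral_nonneg fun y => mul_nonneg (bump_nonneg _ y) (mul_nonneg (sq_nonneg t) (hsub _))
  have hcoef : 0 < 2 * ((k : ℝ) + 1) * t := mul_pos (by positivity) ht
  nlinarith

theorem le_integral_comp_homothety_mul_lap_bump {u : EuclideanSpace ℝ (Fin n) → ℝ}
    (hu : ContDiff ℝ 4 u) (hsub : ∀ x, 0 ≤ lap (lap u) x) (hk : 2 < k)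
    (x₀ : EuclideanSpace ℝ (Fin n)) {R : ℝ} (hR : 0 ≤ R) :
    lap u x₀ * (∫ y : EuclideanSpace ℝ (Fin n), bump k y) * R ^ 2 ≤
      ∫ y, u (x₀ + R • y) * lap (bump k) y := by
  have hw : ContDiff ℝ 4 fun y => u (x₀ + R • y) := hu.comp (by fun_prop)
  have hmono := monotoneOn_integral_comp_homothety_mul_bump (k := k) (contDiff_lap (m := 2) hu)
    hsub (by omega) x₀ (mem_Ici.2 le_rfl) hR hR
  simp only [zero_smul, add_zero, integral_const_mul] at hmono
  calc lap u x₀ * (∫ y, bump k y) * R ^ 2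
      ≤ R ^ 2 * ∫ y, lap u (x₀ + R • y) * bump k y := by
        rw [mul_comm]
        exact mul_le_mul_of_nonneg_left hmono (sq_nonneg R)
    _ = ∫ y, u (x₀ + R • y) * lap (bump k) y := by
        rw [← integral_lap_mul (hw.of_le (by norm_num))
          (contDiff_bump (m := 2) hk) (hasCompactSupport_bump (by omega)),
          lap_comp_homothety (hu.of_le (by norm_num)), ← integral_const_mul]
        simp_rw [mul_assoc]

theorem pow_four_mul_integral_le_integral_mul_lap_lap_bump {u : EuclideanSpace ℝ (Fin n) → ℝ}
    {s : ℝ} (hu : ContDiff ℝ 4 u) (hu₀ : ∀ x, 0 ≤ u x) (hus : ∀ x, u x ^ s ≤ lap (lap u) x)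
    (hk : 4 < k) (x₀ : EuclideanSpace ℝ (Fin n)) (R : ℝ) :
    R ^ 4 * ∫ y, u (x₀ + R • y) ^ s * bump k y ≤
      ∫ y, u (x₀ + R • y) * lap (lap (bump k)) y := by
  have hw : ContDiff ℝ 4 fun y => u (x₀ + R • y) := hu.comp (by fun_prop)
  have hρ : ContDiff ℝ 4 (bump (n := n) k) := contDiff_bump (m := 4) hk
  have hρc : HasCompactSupport (bump (n := n) k) := hasCompactSupport_bump (by omega)
  have hbilap : Continuous (lap (lap u)) :=
    (contDiff_lap (m := 0) (contDiff_lap (m := 2) hu)).continuous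
  rw [← integral_lap_lap_mul hw hρ hρc, lap_lap_comp_homothety hu,
    ← integral_const_mul]
  refine integral_mono_of_nonneg (.of_forall fun y => mul_nonneg (by positivity)
      (mul_nonneg (Real.rpow_nonneg (hu₀ _) _) (bump_nonneg _ y)))
    (integrable_mul_of_hasCompactSupport (continuous_const.mul (hbilap.comp (by fun_prop)))
      hρ.continuous (Or.inr hρc))
    (.of_forall fun y => ?_)
  dsimp only
  rw [← mul_assoc]
  gcongr
  · exact bump_nonneg _ y
  · exact hus _

theorem le_rpow_add_one {x s : ℝ} (hx : 0 ≤ x) (hs : 1 ≤ s) : x ≤ x ^ s + 1 := by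
  rcases le_total x 1 with h | h
  · linarith [Real.rpow_nonneg hx s]
  · linarith [Real.self_le_rpow_of_one_le h hs]

theorem bump_rpow_le {s : ℝ} (hjk : (k : ℝ) ≤ j * s) (y : EuclideanSpace ℝ (Fin n)) :
    bump j y ^ s ≤ bump k y := by
  have h0 : 0 ≤ max (1 - ‖y‖ ^ 2) 0 := le_max_right _ _
  rw [bump, bump, ← Real.rpow_natCast _ j, ← Real.rpow_natCast _ k, ← Real.rpow_mul h0]
  exact Real.rpow_le_rpow_of_exponent_ge' h0 (max_le (sub_le_self _ (sq_nonneg _)) zero_le_one)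
    k.cast_nonneg hjk

theorem mul_bump_le {a s : ℝ} (ha : 0 ≤ a) (hs : 1 ≤ s) (hj : j ≠ 0) (hjk : (k : ℝ) ≤ j * s)
    (y : EuclideanSpace ℝ (Fin n)) :
    a * bump j y ≤ a ^ s * bump k y + (closedBall 0 1).indicator 1 y := by
  by_cases hy : y ∈ closedBall 0 1
  · rw [indicator_of_mem hy, Pi.one_apply]
    calc a * bump j y ≤ (a * bump j y) ^ s + 1 :=
          le_rpow_add_one (mul_nonneg ha (bump_nonneg j y)) hs
      _ = a ^ s * bump j y ^ s + 1 := by rw [Real.mul_rpow ha (bump_nonneg j y)]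
      _ ≤ a ^ s * bump k y + 1 := by gcongr; exact bump_rpow_le hjk y
  · rw [indicator_of_notMem hy, bump_eq_zero hj (by simpa using hy : 1 < ‖y‖).le, mul_zero,
      add_zero]
    exact mul_nonneg (Real.rpow_nonneg ha s) (bump_nonneg k y)

theorem integral_mul_le_of_abs_le_bump {a φ : EuclideanSpace ℝ (Fin n) → ℝ} {s C : ℝ}
    (hs : 1 ≤ s) (hj : j ≠ 0) (hk : k ≠ 0) (hjk : (k : ℝ) ≤ j * s) (ha : Continuous a)
    (ha₀ : ∀ y, 0 ≤ a y) (hφ : Continuous φ) (hC : 0 ≤ C) (hφC : ∀ y, |φ y| ≤ C * bump j y) :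
    ∫ y, a y * φ y ≤ C * ((∫ y, a y ^ s * bump k y) +
      volume.real (closedBall (0 : EuclideanSpace ℝ (Fin n)) 1)) := by
  have hφc : HasCompactSupport φ :=
    HasCompactSupport.intro (isCompact_closedBall 0 1) fun y hy => abs_nonpos_iff.1 <|
      (hφC y).trans_eq (by rw [bump_eq_zero hj (by simpa using hy : 1 < ‖y‖).le, mul_zero])
  have hint : Integrable (fun y => a y ^ s * bump k y) :=
    integrable_mul_of_hasCompactSupport (ha.rpow_const fun _ => Or.inr (by linarith))
      (contDiff_bump (m := 0) (Nat.pos_of_ne_zero hk)).continuous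
      (Or.inr (hasCompactSupport_bump hk))
  have hball : Integrable ((closedBall (0 : EuclideanSpace ℝ (Fin n)) 1).indicator 1) :=
    (integrableOn_const (C := (1 : ℝ)) measure_closedBall_lt_top.ne).integrable_indicator
      measurableSet_closedBall
  calc ∫ y, a y * φ y
      ≤ ∫ y, C * (a y ^ s * bump k y + (closedBall 0 1).indicator 1 y) := by
        refine integral_mono (integrable_mul_of_hasCompactSupport ha hφ (Or.inr hφc))
          ((hint.add hball).const_mul C) fun y => ?_
        calc a y * φ y ≤ a y * (C * bump j y) :=
              mul_le_mul_of_nonneg_left ((le_abs_self _).trans (hφC y)) (ha₀ y)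
          _ = C * (a y * bump j y) := by ring
          _ ≤ _ := mul_le_mul_of_nonneg_left (mul_bump_le (ha₀ y) hs hj hjk y) hC
    _ = _ := by
        rw [integral_const_mul, integral_add hint hball,
          integral_indicator_one measurableSet_closedBall]

theorem false_of_growth {c C₁ C₂ V : ℝ} {J : ℝ → ℝ} (hc : 0 < c) (hC₁ : 0 ≤ C₁)
    (hJ : ∀ R, 0 ≤ J R) (h₁ : ∀ R, 1 ≤ R → c * R ^ 2 ≤ C₁ * (J R + V))
    (h₂ : ∀ R, 1 ≤ R → R ^ 4 * J R ≤ C₂ * (J R + V)) : False := by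
  set R := max 1 (max (2 * C₂) (C₁ * (2 * C₂ * V + V) / c + 1))
  have hR₁ : 1 ≤ R := le_max_left _ _
  have hR₂ : 2 * C₂ ≤ R := (le_max_left _ _).trans (le_max_right _ _)
  have hR₃ : C₁ * (2 * C₂ * V + V) < c * R := by
    rw [← div_lt_iff₀' hc]
    exact (lt_add_one _).trans_le ((le_max_right _ _).trans (le_max_right _ _))
  have hR₄ : R ≤ R ^ 4 := le_self_pow₀ hR₁ (by norm_num)
  have hJR : J R ≤ 2 * C₂ * V := by nlinarith [h₂ R hR₁, hJ R]
  nlinarith [h₁ R hR₁, mul_le_mul_of_nonneg_left hJR hC₁]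

theorem lap_nonpos_of_rpow_le_lap_lap {u : EuclideanSpace ℝ (Fin n) → ℝ} {s : ℝ} (hs : 1 < s)
    (hu : ContDiff ℝ 4 u) (hu₀ : ∀ x, 0 ≤ u x) (hus : ∀ x, u x ^ s ≤ lap (lap u) x)
    (x₀ : EuclideanSpace ℝ (Fin n)) : lap u x₀ ≤ 0 := by
  by_contra! hc
  obtain ⟨m, hm₁, hms⟩ : ∃ m : ℕ, 1 ≤ m ∧ ((m + 4 : ℕ) : ℝ) ≤ m * s := by
    obtain ⟨m, hm⟩ := exists_nat_ge (4 / (s - 1))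
    rw [div_le_iff₀ (by linarith)] at hm
    exact ⟨m + 1, by omega, by push_cast; nlinarith⟩
  obtain ⟨C₁, hC₁, hlap⟩ := exists_abs_lap_bump_le (n := n) (k := m + 2) (by omega)
  obtain ⟨C₂, hC₂, hlaplap⟩ := exists_abs_lap_lap_bump_le (n := n) hm₁
  have habsorb (R : ℝ) {j : ℕ} (hj : j ≠ 0) (hjs : ((m + 4 : ℕ) : ℝ) ≤ j * s) {φ C}
      (hφ : Continuous φ) (hC : 0 ≤ C) (hφC : ∀ y, |φ y| ≤ C * bump j y) :=
    integral_mul_le_of_abs_le_bump hs.le hj (by omega) hjs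
      (hu.continuous.comp (by fun_prop : Continuous fun y => x₀ + R • y)) (fun _ => hu₀ _)
      hφ hC hφC
  have hρ : ContDiff ℝ 4 (bump (n := n) (m + 4)) := contDiff_bump (m := 4) (by omega)
  refine false_of_growth (mul_pos hc (integral_bump_pos (n := n) (k := m + 4) (by omega))) hC₁
    (C₂ := C₂) (V := volume.real (closedBall (0 : EuclideanSpace ℝ (Fin n)) 1))
    (J := fun R => ∫ y, u (x₀ + R • y) ^ s * bump (m + 4) y)
    (fun R => integral_nonneg fun y => mul_nonneg (Real.rpow_nonneg (hu₀ _) _) (bump_nonneg _ y))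
    (fun R hR => ?_) (fun R _ => ?_)
  · exact (le_integral_comp_homothety_mul_lap_bump hu
      (fun x => (Real.rpow_nonneg (hu₀ x) s).trans (hus x)) (by omega) x₀ (by linarith)).trans
      (habsorb R (j := m + 2) (by omega) (by push_cast at hms ⊢; nlinarith)
        (contDiff_lap (m := 2) hρ).continuous hC₁ hlap)
  · exact (pow_four_mul_integral_le_integral_mul_lap_lap_bump hu hu₀ hus (by omega) x₀ R).trans
      (habsorb R (j := m) (by omega) hms
        (contDiff_lap (m := 0) (contDiff_lap (m := 2) hρ)).continuous hC₂ hlaplap)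

theorem rpow_le_rpow_sub_one_mul {x y s : ℝ} (hx : 0 ≤ x) (hxy : x ≤ y) (hs : 1 ≤ s) :
    x ^ s ≤ y ^ (s - 1) * x := by
  rcases hx.eq_or_lt with rfl | hx
  · rw [Real.zero_rpow (by linarith), mul_zero]
  · calc x ^ s = x ^ (s - 1) * x := by rw [Real.rpow_sub_one hx.ne', div_mul_cancel₀ _ hx.ne']
      _ ≤ y ^ (s - 1) * x := by gcongr

theorem le_vnorm {p : ℕ} (U : Fin p → EuclideanSpace ℝ (Fin n) → ℝ) (i : Fin p)
    (x : EuclideanSpace ℝ (Fin n)) : U i x ≤ vnorm U x :=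
  (le_abs_self _).trans <| Real.abs_le_sqrt <|
    Finset.single_le_sum (f := fun j => U j x ^ 2) (fun _ _ => sq_nonneg _) (Finset.mem_univ i)

end Superharmonic

open Superharmonic in
theorem statement10_general (n p : ℕ) (hn : 5 ≤ n) (s : ℝ)
    (hs1 : (n : ℝ) / ((n : ℝ) - 4) < s)
    (U : Fin p → EuclideanSpace ℝ (Fin n) → ℝ)
    (hnonneg : ∀ i x, 0 ≤ U i x)
    (hC4 : ∀ i, ContDiff ℝ 4 (U i))
    (hpde : ∀ i x, bilap (U i) x = (vnorm U x) ^ (s - 1) * U i x) :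
    ∀ i x, 0 ≤ -lap (U i) x := by
  have hs : 1 < s := by
    have hn' : (5 : ℝ) ≤ n := by exact_mod_cast hn
    have : 1 < (n : ℝ) / (n - 4) := by rw [lt_div_iff₀ (by linarith)]; linarith
    linarith
  intro i x
  have hsource (y : EuclideanSpace ℝ (Fin n)) : U i y ^ s ≤ lap (lap (U i)) y :=
    (rpow_le_rpow_sub_one_mul (hnonneg i y) (le_vnorm U i y) hs.le).trans_eq (hpde i y).symm
  linarith [lap_nonpos_of_rpow_le_lap_lap hs (hC4 i) (hnonneg i) hsource x]

/-- nonnegative entire solutions of `Δ² uᵢ = |U|^{s-1} uᵢ` with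
`n/(n-4) < s < (n+4)/(n-4)` are superharmonic: `-Δ uᵢ ≥ 0` everywhere. -/
theorem statement10 (n p : ℕ) (hn : 5 ≤ n) (hp : 1 ≤ p) (s : ℝ)
    (hs1 : (n : ℝ) / ((n : ℝ) - 4) < s) (hs2 : s < ((n : ℝ) + 4) / ((n : ℝ) - 4))
    (U : Fin p → EuclideanSpace ℝ (Fin n) → ℝ)
    (hnonneg : ∀ i x, 0 ≤ U i x)
    (hC4 : ∀ i, ContDiff ℝ 4 (U i))
    (hpde : ∀ i x, bilap (U i) x = (vnorm U x) ^ (s - 1) * U i x) :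
    ∀ i x, 0 ≤ -lap (U i) x :=
  statement10_general n p hn s hs1 U hnonneg hC4 hpde
end

section
/- Let n ≥ 5 and C₀ > 0. Suppose ψ : B₂ → ℝ is C¹ and positive on the ball B₂ ⊂ ℝ^n of radius 2 centered at the origin, and |∇ψ(y)| ≤ C₀ ψ(y) for all y ∈ B_{3/2}. Then there exists r₀ ∈ (0, 1/2), depending only on n and C₀, such that for every x ∈ B₁, every 0 < μ ≤ r₀, and every y ∈ B_{3/2} with |y − x| ≥ μ, one has (μ/|y − x|)^{n−4} ψ( x + μ² (y − x)/|y − x|² ) ≤ ψ(y). -/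
/-!
Write `d = ‖y - x‖`. The inverted point `z = x + (μ/d)² • (y - x)` lies on the segment
`[x, y]` at distance `d - μ²/d` from `y`. The hypothesis says that `log ψ` is `C₀`-Lipschitz
on the convex ball `B_{3/2}`, so `ψ z ≤ ψ y · exp (C₀ (d - μ²/d))`, and the claim reduces to
the scalar inequality `C₀ (d - μ²/d) ≤ log (d/μ)` (the factor `n - 4 ≥ 1` only helps).
For `d ≤ 1/(2C₀)` this follows from `log s ≥ 1 - 1/s`; for larger `d` the left side is at
most `C₀ · 5/2`, while `log (d/μ)` is large once `μ` is small.
-/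

open Metric Real

theorem mul_sub_sq_div_le_log_div {C D μ d : ℝ} (hC : 0 < C) (hμ : 0 < μ) (hμd : μ ≤ d)
    (hdD : d ≤ D) (hμr : μ ≤ exp (-(C * D)) / (2 * C)) :
    C * (d - μ ^ 2 / d) ≤ log (d / μ) := by
  have hd : 0 < d := hμ.trans_le hμd
  rcases le_or_gt d (1 / (2 * C)) with hsmall | hlarge
  · have hCd : C * (d + μ) ≤ 1 := by
      have : C * d ≤ 1 / 2 := by
        calc C * d ≤ C * (1 / (2 * C)) := by gcongr
          _ = 1 / 2 := by field_simp
      nlinarith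
    have hfactor : C * (d - μ ^ 2 / d) = C * (d + μ) * (1 - μ / d) := by
      field_simp; ring
    have hnonneg : 0 ≤ 1 - μ / d := by rw [sub_nonneg, div_le_one hd]; exact hμd
    calc C * (d - μ ^ 2 / d) = C * (d + μ) * (1 - μ / d) := hfactor
      _ ≤ 1 - μ / d := mul_le_of_le_one_left hnonneg hCd
      _ = 1 - (d / μ)⁻¹ := by rw [inv_div]
      _ ≤ log (d / μ) := one_sub_inv_le_log_of_pos (div_pos hd hμ)
  · have hexp : exp (C * D) ≤ d / μ := by
      rw [le_div_iff₀ hμ, ← le_div_iff₀' (exp_pos _), div_eq_mul_inv, ← exp_neg]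
      calc μ ≤ exp (-(C * D)) / (2 * C) := hμr
        _ = exp (-(C * D)) * (1 / (2 * C)) := by ring
        _ ≤ d * exp (-(C * D)) := by rw [mul_comm]; gcongr
    calc C * (d - μ ^ 2 / d) ≤ C * D := by
          gcongr
          linarith [div_nonneg (sq_nonneg μ) hd.le]
      _ ≤ log (d / μ) := (le_log_iff_exp_le (div_pos hd hμ)).2 hexp

theorem div_rpow_mul_exp_le_one {μ d p a : ℝ} (hμ : 0 < μ) (hμd : μ ≤ d) (hp : 1 ≤ p)
    (ha : a ≤ log (d / μ)) : (μ / d) ^ p * exp a ≤ 1 := by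
  have hd : 0 < d := hμ.trans_le hμd
  have hpow : (μ / d) ^ p ≤ μ / d := by
    simpa using rpow_le_rpow_of_exponent_ge (div_pos hμ hd) ((div_le_one hd).2 hμd) hp
  have hexp : exp a ≤ d / μ := by
    simpa [exp_log (div_pos hd hμ)] using exp_le_exp.2 ha
  calc (μ / d) ^ p * exp a ≤ μ / d * (d / μ) := by gcongr
    _ = 1 := by field_simp

theorem le_mul_exp_norm_sub_of_norm_fderiv_le {E : Type*} [NormedAddCommGroup E]
    [NormedSpace ℝ E] {ψ : E → ℝ} {s : Set E} {C : ℝ} (hs : Convex ℝ s)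
    (hdiff : ∀ p ∈ s, DifferentiableAt ℝ ψ p) (hpos : ∀ p ∈ s, 0 < ψ p)
    (hgrad : ∀ p ∈ s, ‖fderiv ℝ ψ p‖ ≤ C * ψ p) {y z : E} (hy : y ∈ s)
    (hz : z ∈ s) :
    ψ z ≤ ψ y * exp (C * ‖z - y‖) := by
  have hlog : ∀ p ∈ s, HasFDerivAt (fun q => log (ψ q)) ((ψ p)⁻¹ • fderiv ℝ ψ p) p :=
    fun p hp => (hdiff p hp).hasFDerivAt.log (hpos p hp).ne'
  have hlog_bound : ∀ p ∈ s, ‖fderiv ℝ (fun q => log (ψ q)) p‖ ≤ C := by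
    intro p hp
    rw [(hlog p hp).fderiv, norm_smul, norm_inv, norm_of_nonneg (hpos p hp).le,
      inv_mul_le_iff₀ (hpos p hp), mul_comm]
    exact hgrad p hp
  have hlip := hs.norm_image_sub_le_of_norm_fderiv_le
    (fun p hp => (hlog p hp).differentiableAt) hlog_bound hy hz
  rw [← log_le_log_iff (hpos z hz) (mul_pos (hpos y hy) (exp_pos _)),
    log_mul (hpos y hy).ne' (exp_pos _).ne', log_exp]
  linarith [le_abs_self (log (ψ z) - log (ψ y)), norm_eq_abs (log (ψ z) - log (ψ y))]

theorem norm_add_smul_sub_sub {E : Type*} [SeminormedAddCommGroup E] [NormedSpace ℝ E]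
    (x y : E) {t : ℝ} (ht : t ≤ 1) : ‖x + t • (y - x) - y‖ = (1 - t) * ‖y - x‖ := by
  rw [show x + t • (y - x) - y = (t - 1) • (y - x) by module, norm_smul,
    norm_of_nonpos (by linarith)]
  ring

/-- the Kelvin-transform comparison lemma for positive C¹
functions with bounded logarithmic gradient; the radius `r₀` depends only on
`n` and `C₀`. -/
theorem statement14 (n : ℕ) (hn : 5 ≤ n) (C₀ : ℝ) (hC₀ : 0 < C₀) :
    ∃ r₀ : ℝ, 0 < r₀ ∧ r₀ < 1 / 2 ∧
      ∀ ψ : EuclideanSpace ℝ (Fin n) → ℝ,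
        ContDiffOn ℝ 1 ψ (ball (0 : EuclideanSpace ℝ (Fin n)) 2) →
        (∀ x ∈ ball (0 : EuclideanSpace ℝ (Fin n)) 2, 0 < ψ x) →
        (∀ y ∈ ball (0 : EuclideanSpace ℝ (Fin n)) (3 / 2),
          ‖fderiv ℝ ψ y‖ ≤ C₀ * ψ y) →
        ∀ x ∈ ball (0 : EuclideanSpace ℝ (Fin n)) 1,
        ∀ μ : ℝ, 0 < μ → μ ≤ r₀ →
        ∀ y ∈ ball (0 : EuclideanSpace ℝ (Fin n)) (3 / 2), μ ≤ ‖y - x‖ →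
          (μ / ‖y - x‖) ^ ((n : ℝ) - 4) *
              ψ (x + (μ / ‖y - x‖) ^ 2 • (y - x)) ≤ ψ y := by
  refine ⟨min (1 / 4) (exp (-(C₀ * (5 / 2))) / (2 * C₀)), by positivity,
    (min_le_left _ _).trans_lt (by norm_num), ?_⟩
  intro ψ hψ hpos hgrad x hx μ hμ hμr y hy hμd
  set d := ‖y - x‖
  have hd : 0 < d := hμ.trans_le hμd
  have ht : (μ / d) ^ 2 ∈ Set.Icc (0 : ℝ) 1 :=
    ⟨by positivity, pow_le_one₀ (by positivity) ((div_le_one hd).2 hμd)⟩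
  have hsub : ball (0 : EuclideanSpace ℝ (Fin n)) (3 / 2) ⊆ ball 0 2 :=
    ball_subset_ball (by norm_num)
  have hz := (convex_ball _ _).add_smul_sub_mem (ball_subset_ball (by norm_num) hx) hy ht
  have hψz := le_mul_exp_norm_sub_of_norm_fderiv_le (convex_ball _ _)
    (fun p hp => (hψ.differentiableOn one_ne_zero).differentiableAt
      (isOpen_ball.mem_nhds (hsub hp))) (fun p hp => hpos p (hsub hp)) hgrad hy hz
  rw [norm_add_smul_sub_sub x y ht.2, show (1 - (μ / d) ^ 2) * d = d - μ ^ 2 / d by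
    field_simp] at hψz
  have hd_le : d ≤ 5 / 2 := by
    rw [mem_ball_zero_iff] at hx hy
    linarith [norm_sub_le y x]
  have hkey := mul_sub_sq_div_le_log_div hC₀ hμ hμd hd_le (hμr.trans (min_le_right _ _))
  have hn4 : (1 : ℝ) ≤ n - 4 := by
    have : (5 : ℝ) ≤ n := by exact_mod_cast hn
    linarith
  calc (μ / d) ^ ((n : ℝ) - 4) * ψ (x + (μ / d) ^ 2 • (y - x))
      ≤ (μ / d) ^ ((n : ℝ) - 4) * (ψ y * exp (C₀ * (d - μ ^ 2 / d))) := by gcongr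
    _ = (μ / d) ^ ((n : ℝ) - 4) * exp (C₀ * (d - μ ^ 2 / d)) * ψ y := by ring
    _ ≤ 1 * ψ y := by
        gcongr
        · exact (hpos y (hsub hy)).le
        · exact div_rpow_mul_exp_le_one hμ hμd hn4 hkey
    _ = ψ y := one_mul _
end
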